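/- arXiv:2603.10386 — 5 statements merged into one kernel-verified Lean document; each statement's English description precedes it below -/
import Mathlib

section
/- Under the hypotheses of the hyperelliptic u_g-flow, the branch α_a of the function al_a satisfies ∂_s α_a = ψ_a · α_a on U. -/
open Finset

noncomputable def alFd (g : ℕ) (x : Fin g → ℂ → ℂ) (i : Fin g) (p : ℂ) : ℂ :=
  ∏ j ∈ Finset.univ.erase i, (x i p - x j p)

noncomputable def alPsi (g : ℕ) (x y : Fin g → ℂ → ℂ) (ba : ℂ) (p : ℂ) : ℂ :=
  ∑ i : Fin g, y i p / (alFd g x i p * (x i p - ba))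

/-!
Taking logarithmic derivatives of `α ^ 2 = ∏ i, (x i - b a)` gives
`2 α'/α = ∑ i, x i'/(x i - b a)`, and along the `u_g`-flow `x i' = 2 y i / F'(x i)`,
so the right-hand side is `2 ψ_a`.
-/

open Filter Topology

theorem two_mul_logDeriv_eq_sum_logDeriv_of_sq_eventuallyEq_prod {𝕜 𝕜' ι : Type*}
    [NontriviallyNormedField 𝕜] [NontriviallyNormedField 𝕜'] [NormedAlgebra 𝕜 𝕜']
    {s : Finset ι} {f : ι → 𝕜 → 𝕜'} {α : 𝕜 → 𝕜'} {p : 𝕜}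
    (hα : DifferentiableAt 𝕜 α p) (hf : ∀ i ∈ s, f i p ≠ 0)
    (hfd : ∀ i ∈ s, DifferentiableAt 𝕜 (f i) p)
    (hsq : (fun q ↦ α q ^ 2) =ᶠ[𝓝 p] fun q ↦ ∏ i ∈ s, f i q) :
    2 * logDeriv α p = ∑ i ∈ s, logDeriv (f i) p := by
  rw [← logDeriv_prod hf hfd, ← (logDeriv_congr_nhds hsq).eq_of_nhds, logDeriv_fun_pow hα]
  norm_num

theorem sum_logDeriv_sub_eq_two_mul_alPsi {g : ℕ} {x y : Fin g → ℂ → ℂ} {p : ℂ} (c : ℂ)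
    (hflow : ∀ i, deriv (x i) p = 2 * y i p / alFd g x i p) :
    ∑ i, logDeriv (fun q ↦ x i q - c) p = 2 * alPsi g x y c p := by
  simp only [alPsi, mul_sum, logDeriv_apply, deriv_sub_const, hflow, mul_div_assoc, div_div]

theorem stmt2_general
    (g : ℕ)
    (b : Fin (2 * g + 1) → ℂ)
    (U : Set ℂ) (hU : IsOpen U)
    (x y : Fin g → ℂ → ℂ)
    (hx : ∀ i, DifferentiableOn ℂ (x i) U)
    (hflow : ∀ p ∈ U, ∀ i, deriv (x i) p = 2 * y i p / alFd g x i p)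
    (a : Fin (2 * g + 1))
    (hxa : ∀ p ∈ U, ∀ i, x i p ≠ b a)
    (α : ℂ → ℂ) (hα : DifferentiableOn ℂ α U)
    (hαne : ∀ p ∈ U, α p ≠ 0)
    (hα2 : ∀ p ∈ U, (α p) ^ 2 = ∏ i : Fin g, (x i p - b a))
 :
    ∀ p ∈ U, deriv α p = alPsi g x y (b a) p * α p := by
  intro p hp
  have hUp : U ∈ 𝓝 p := hU.mem_nhds hp
  have hlog : 2 * logDeriv α p = 2 * alPsi g x y (b a) p := by
    rw [← sum_logDeriv_sub_eq_two_mul_alPsi (b a) (hflow p hp)]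
    refine two_mul_logDeriv_eq_sum_logDeriv_of_sq_eventuallyEq_prod
      ((hα p hp).differentiableAt hUp) (fun i _ ↦ sub_ne_zero.2 (hxa p hp i))
      (fun i _ ↦ (((hx i) p hp).differentiableAt hUp).sub_const _) ?_
    filter_upwards [hUp] with q hq using hα2 q hq
  rw [← mul_left_cancel₀ two_ne_zero hlog, logDeriv_apply, div_mul_cancel₀ _ (hαne p hp)]

theorem stmt2
    (g : ℕ) (hg : 1 ≤ g)
    (b : Fin (2 * g + 1) → ℂ) (hb : Function.Injective b)
    (U : Set ℂ) (hU : IsOpen U) (hUne : U.Nonempty)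
    (x y : Fin g → ℂ → ℂ)
    (hx : ∀ i, DifferentiableOn ℂ (x i) U)
    (hy : ∀ i, DifferentiableOn ℂ (y i) U)
    (hdist : ∀ p ∈ U, ∀ i j, i ≠ j → x i p ≠ x j p)
    (hy2 : ∀ p ∈ U, ∀ i, (y i p) ^ 2 = ∏ j, (x i p - b j))
    (hyne : ∀ p ∈ U, ∀ i, y i p ≠ 0)
    (hflow : ∀ p ∈ U, ∀ i, deriv (x i) p = 2 * y i p / alFd g x i p)
    (a : Fin (2 * g + 1))
    (hxa : ∀ p ∈ U, ∀ i, x i p ≠ b a)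
    (α : ℂ → ℂ) (hα : DifferentiableOn ℂ α U)
    (hαne : ∀ p ∈ U, α p ≠ 0)
    (hα2 : ∀ p ∈ U, (α p) ^ 2 = ∏ i : Fin g, (x i p - b a))
 :
    ∀ p ∈ U, deriv α p = alPsi g x y (b a) p * α p :=
  stmt2_general g b U hU x y hx hflow a hxa α hα hαne hα2
end

section
/- (Miura transformation, Theorem 4.6(2)) Under the hypotheses of the hyperelliptic u_g-flow, for every index a with x_i ≠ b_a on U one has ∂_s ψ_a + ψ_a^2 = 2 (x_1 + x_2 + ⋯ + x_g) + λ_{2g} + b_a on U. -/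
open Finset

/-
Write `f = (X - b_a) h` and `F = ∏ (X - x_i)`, so that `y_i² = (x_i - b_a) h(x_i)`. Differentiating
`ψ_a` along the flow, the contributions of the velocities `∂x_j` (`j ≠ i`) to `∂F'(x_i)`,
symmetrised over the pairs `{i, j}`, cancel the cross terms of `ψ_a²`; what remains is
`∂ψ_a + ψ_a² = ∑ᵢ Res_{x_i} (h / F²)`. Since `h` and `F²` are both monic of degree `2g`, the residue
theorem (here: Hermite interpolation at the double nodes `x_i`) identifies this sum with the
coefficient of `X^{2g-1}` in `h - F²`, which is `λ_{2g} + b_a + 2 ∑ x_i`.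
-/

open Polynomial Lagrange

section Derivatives

variable {𝕜 : Type*} [NontriviallyNormedField 𝕜]

theorem HasDerivAt.fun_finsetProd_of_ne_zero {ι : Type*} [DecidableEq ι] {u : Finset ι}
    {f : ι → 𝕜 → 𝕜} {f' : ι → 𝕜} {x : 𝕜} (hf : ∀ i ∈ u, HasDerivAt (f i) (f' i) x)
    (hne : ∀ i ∈ u, f i x ≠ 0) :
    HasDerivAt (∏ i ∈ u, f i ·) ((∏ i ∈ u, f i x) * ∑ i ∈ u, f' i / f i x) x := by
  refine (HasDerivAt.fun_finsetProd hf).congr_deriv ?_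
  rw [mul_sum]
  refine sum_congr rfl fun i hi => ?_
  rw [← mul_prod_erase u _ hi, smul_eq_mul]
  field_simp [hne i hi]

theorem HasDerivAt.of_eventually_sq_eq [CharZero 𝕜] {y φ : 𝕜 → 𝕜} {φ' x : 𝕜}
    (hy : DifferentiableAt 𝕜 y x) (hφ : HasDerivAt φ φ' x) (hsq : ∀ᶠ q in nhds x, y q ^ 2 = φ q)
    (hne : y x ≠ 0) : HasDerivAt y (φ' / (2 * y x)) x := by
  obtain ⟨y', hy'⟩ : ∃ y', HasDerivAt y y' x := ⟨_, hy.hasDerivAt⟩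
  have hsq' : HasDerivAt (fun q => y q ^ 2) (2 * y x * y') x := by
    simpa using hy'.fun_pow 2
  rwa [← hsq'.unique (hφ.congr_of_eventuallyEq hsq),
    mul_div_cancel_left₀ _ (mul_ne_zero two_ne_zero hne)]

end Derivatives

section Hermite

variable {K : Type*} [Field K] {ι : Type*}

def nodeProd [Fintype ι] [DecidableEq ι] (t : ι → K) (i : ι) : K :=
  ∏ j ∈ univ.erase i, (t i - t j)

lemma nodeProd_ne_zero [Fintype ι] [DecidableEq ι] {t : ι → K} (ht : Function.Injective t)
    (i : ι) : nodeProd t i ≠ 0 :=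
  prod_ne_zero_iff.mpr fun _ hj => sub_ne_zero.mpr (ht.ne (ne_of_mem_erase hj).symm)

/-- The residue at `t i` of `p / F ^ 2`, where `F = ∏ j, (X - t j)`. -/
noncomputable def residueDivNodalSq [Fintype ι] [DecidableEq ι] (t : ι → K) (p : K[X])
    (i : ι) : K :=
  (p.derivative.eval (t i) - 2 * p.eval (t i) * ∑ j ∈ univ.erase i, (t i - t j)⁻¹) /
    nodeProd t i ^ 2

lemma eval_derivative_nodal [DecidableEq ι] {s : Finset ι} {v : ι → K} {x : K}
    (hx : ∀ j ∈ s, x ≠ v j) :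
    (derivative (nodal s v)).eval x = (nodal s v).eval x * ∑ j ∈ s, (x - v j)⁻¹ := by
  rw [derivative_nodal, eval_finsetSum, mul_sum]
  refine sum_congr rfl fun j hj => ?_
  rw [eval_nodal, eval_nodal, ← mul_prod_erase s _ hj,
    mul_comm _ (x - v j)⁻¹, inv_mul_cancel_left₀ (sub_ne_zero.mpr (hx j hj))]

lemma eq_zero_of_degree_lt_of_eval_derivative_eq_zero [Fintype ι] {t : ι → K}
    (ht : Function.Injective t) {P : K[X]} (hdeg : P.degree < ↑(2 * Fintype.card ι))
    (h0 : ∀ i, P.eval (t i) = 0) (h1 : ∀ i, P.derivative.eval (t i) = 0) : P = 0 := by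
  by_contra hP
  have hdvd : nodal univ t ^ 2 ∣ P := by
    rw [nodal_eq, ← prod_pow]
    refine Fintype.prod_dvd_of_coprime (fun i j hij => (pairwise_coprime_X_sub_C ht hij).pow)
      fun i => ?_
    rw [← le_rootMultiplicity_iff hP]
    exact (one_lt_rootMultiplicity_iff_isRoot hP).mpr ⟨h0 i, h1 i⟩
  refine (degree_le_of_dvd hdvd hP).not_gt (hdeg.trans_le ?_)
  rw [degree_pow, degree_nodal, card_univ, nsmul_eq_mul]
  norm_cast

lemma natDegree_linear_mul_sq_le (a b c : K) (G : K[X]) :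
    ((C a * (X - C c) + C b) * G ^ 2).natDegree ≤ 1 + 2 * G.natDegree := by
  refine natDegree_mul_le.trans (add_le_add ?_ natDegree_pow_le)
  compute_degree

lemma coeff_linear_mul_sq_of_monic (a b c : K) {G : K[X]} (hG : G.Monic) :
    ((C a * (X - C c) + C b) * G ^ 2).coeff (1 + 2 * G.natDegree) = a := by
  rw [coeff_mul_add_eq_of_natDegree_le (by compute_degree) natDegree_pow_le,
    ← natDegree_pow, (hG.pow 2).coeff_natDegree]
  simp [coeff_X]

lemma sum_residueDivNodalSq_eq_coeff [Fintype ι] [DecidableEq ι] [Nonempty ι] {t : ι → K}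
    (ht : Function.Injective t) {p : K[X]} (hp : p.degree < ↑(2 * Fintype.card ι)) :
    ∑ i, residueDivNodalSq t p i = p.coeff (2 * Fintype.card ι - 1) := by
  set G : ι → K[X] := fun i => nodal (univ.erase i) t
  have hGdeg : ∀ i, 1 + 2 * (G i).natDegree = 2 * Fintype.card ι - 1 := fun i => by
    have := Fintype.card_pos (α := ι)
    rw [natDegree_nodal, card_erase_of_mem (mem_univ i), card_univ]
    omega
  have hG : ∀ i, (G i).eval (t i) = nodeProd t i := fun i => eval_nodal
  have hG0 : ∀ i j, j ≠ i → (G j).eval (t i) = 0 := fun i j hji =>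
    eval_nodal_at_node (mem_erase.mpr ⟨hji.symm, mem_univ i⟩)
  have hG' : ∀ i, (G i).derivative.eval (t i) =
      nodeProd t i * ∑ j ∈ univ.erase i, (t i - t j)⁻¹ := fun i => by
    rw [eval_derivative_nodal fun j hj => ht.ne (ne_of_mem_erase hj).symm, hG]
  -- the Hermite interpolant of `p` at the double nodes `t i`
  set S : K[X] := ∑ i, (C (residueDivNodalSq t p i) * (X - C (t i)) +
    C (p.eval (t i) / nodeProd t i ^ 2)) * G i ^ 2
  have hS0 : ∀ i, S.eval (t i) = p.eval (t i) := fun i => by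
    rw [eval_finsetSum, sum_eq_single i (fun j _ hji => by simp [hG0 i j hji]) (by simp)]
    simp [hG, nodeProd_ne_zero ht]
  have hS1 : ∀ i, S.derivative.eval (t i) = p.derivative.eval (t i) := fun i => by
    rw [derivative_sum, eval_finsetSum, sum_eq_single i
      (fun j _ hji => by simp [derivative_mul, derivative_pow, hG0 i j hji]) (by simp)]
    simp only [derivative_mul, derivative_pow, derivative_add, derivative_sub, derivative_C,
      derivative_X, eval_add, eval_mul, eval_pow, eval_sub, eval_C, eval_X, eval_zero, eval_one,
      hG, hG', sub_self]
    unfold residueDivNodalSq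
    field_simp [nodeProd_ne_zero ht i]
    ring
  have hSdeg : S.degree < ↑(2 * Fintype.card ι) := by
    refine degree_le_natDegree.trans_lt ?_
    rw [Nat.cast_lt]
    refine (natDegree_sum_le_of_forall_le _ _ fun i _ =>
      (natDegree_linear_mul_sq_le _ _ _ _).trans (hGdeg i).le).trans_lt ?_
    have := Fintype.card_pos (α := ι)
    omega
  have hpS : p = S := sub_eq_zero.mp <|
    eq_zero_of_degree_lt_of_eval_derivative_eq_zero ht
      ((degree_sub_le p S).trans_lt (max_lt hp hSdeg))
      (fun i => by rw [eval_sub, hS0, sub_self])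
      (fun i => by rw [derivative_sub, eval_sub, hS1, sub_self])
  conv_rhs => rw [hpS, finsetSum_coeff]
  refine sum_congr rfl fun i _ => ?_
  rw [← hGdeg i, coeff_linear_mul_sq_of_monic _ _ _ nodal_monic]

lemma sum_residueDivNodalSq_eq_nextCoeff_add [Fintype ι] [DecidableEq ι] [Nonempty ι]
    {t : ι → K} (ht : Function.Injective t) {h : K[X]} (hmon : h.Monic)
    (hdeg : h.natDegree = 2 * Fintype.card ι) :
    ∑ i, residueDivNodalSq t h i = h.nextCoeff + 2 * ∑ i, t i := by
  set F : K[X] := nodal univ t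
  have hF : ∀ i, F.eval (t i) = 0 := fun i => eval_nodal_at_node (mem_univ i)
  have hres : ∀ i, residueDivNodalSq t (h - F ^ 2) i = residueDivNodalSq t h i := fun i => by
    simp [residueDivNodalSq, derivative_pow, hF]
  have hF2deg : (F ^ 2).natDegree = 2 * Fintype.card ι := by
    rw [natDegree_pow, natDegree_nodal, card_univ]
  have hpos : 0 < 2 * Fintype.card ι := by have := Fintype.card_pos (α := ι); omega
  -- subtracting `F ^ 2` kills the top coefficient without changing any residue
  have hlt : (h - F ^ 2).degree < ↑(2 * Fintype.card ι) := by
    have hdeg_eq : h.degree = (F ^ 2).degree := by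
      rw [degree_eq_natDegree hmon.ne_zero, degree_eq_natDegree (nodal_monic.pow 2).ne_zero,
        hdeg, hF2deg]
    have := degree_sub_lt_left hdeg_eq hmon.ne_zero
      (by rw [hmon.leadingCoeff, (nodal_monic.pow 2).leadingCoeff])
    rwa [degree_eq_natDegree hmon.ne_zero, hdeg] at this
  rw [← sum_congr rfl fun i _ => hres i, sum_residueDivNodalSq_eq_coeff ht hlt, coeff_sub,
    ← hdeg, ← nextCoeff_of_natDegree_pos (hdeg ▸ hpos), hdeg, ← hF2deg,
    ← nextCoeff_of_natDegree_pos (hF2deg ▸ hpos), nodal_monic.nextCoeff_pow, nodal_eq,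
    prod_X_sub_C_nextCoeff]
  simp only [nsmul_eq_mul, Nat.cast_ofNat]
  ring

end Hermite

section SumIdentities

variable {K : Type*} [Field K] {ι : Type*} [Fintype ι] [DecidableEq ι]

lemma sum_sum_erase_comm {M : Type*} [AddCommMonoid M] (f : ι → ι → M) :
    ∑ i, ∑ j ∈ univ.erase i, f i j = ∑ i, ∑ j ∈ univ.erase i, f j i :=
  sum_comm' fun i j => by simp [and_comm, ne_comm]

lemma sq_sum_eq_sum_sq_add_sum_sum_erase {R : Type*} [CommSemiring R] (a : ι → R) :
    (∑ i, a i) ^ 2 = ∑ i, a i ^ 2 + ∑ i, ∑ j ∈ univ.erase i, a i * a j := by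
  rw [sq, sum_mul_sum, ← sum_add_distrib]
  exact sum_congr rfl fun i _ => by rw [← add_sum_erase _ _ (mem_univ i), sq]

lemma two_mul_sum_sum_erase_mul_sub_div_sub {t : ι → K} (ht : Function.Injective t)
    (a : ι → K) (β : K) :
    2 * ∑ i, ∑ j ∈ univ.erase i, a i * a j * (t j - β) / (t i - t j) =
      -∑ i, ∑ j ∈ univ.erase i, a i * a j := by
  rw [two_mul]
  nth_rw 2 [sum_sum_erase_comm]
  simp only [← sum_add_distrib, ← sum_neg_distrib]
  refine sum_congr rfl fun i _ => sum_congr rfl fun j hj => ?_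
  have hij : t i - t j ≠ 0 := sub_ne_zero.mpr (ht.ne (ne_of_mem_erase hj).symm)
  rw [← neg_sub (t i) (t j)]
  field_simp
  ring

lemma sum_add_sq_eq_sum_residueDivNodalSq {t y : ι → K} {β : K}
    {h : K[X]} (ht : Function.Injective t) (hβ : ∀ i, t i ≠ β)
    (hy2 : ∀ i, y i ^ 2 = (t i - β) * h.eval (t i)) :
    ∑ i, (h.derivative.eval (t i) / nodeProd t i ^ 2 - (y i / (nodeProd t i * (t i - β))) ^ 2 -
        y i / (nodeProd t i * (t i - β)) *
          ∑ j ∈ univ.erase i, (2 * y i / nodeProd t i - 2 * y j / nodeProd t j) / (t i - t j)) +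
      (∑ i, y i / (nodeProd t i * (t i - β))) ^ 2 =
    ∑ i, residueDivNodalSq t h i := by
  set ψ : ι → K := fun i => y i / (nodeProd t i * (t i - β))
  have hW := nodeProd_ne_zero ht
  have hu : ∀ i, t i - β ≠ 0 := fun i => sub_ne_zero.mpr (hβ i)
  have hcross : ∀ i, y i / (nodeProd t i * (t i - β)) * ∑ j ∈ univ.erase i,
      (2 * y i / nodeProd t i - 2 * y j / nodeProd t j) / (t i - t j) =
      2 * h.eval (t i) * (∑ j ∈ univ.erase i, (t i - t j)⁻¹) / nodeProd t i ^ 2 -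
        2 * ∑ j ∈ univ.erase i, ψ i * ψ j * (t j - β) / (t i - t j) := fun i => by
    rw [mul_sum, mul_sum, sum_div, mul_sum, ← sum_sub_distrib]
    refine sum_congr rfl fun j hj => ?_
    have hij : t i - t j ≠ 0 := sub_ne_zero.mpr (ht.ne (ne_of_mem_erase hj).symm)
    simp only [ψ]
    field_simp [hW i, hW j, hu i, hu j, hij]
    linear_combination (2 * nodeProd t j) * hy2 i
  simp only [hcross]
  simp only [sq_sum_eq_sum_sq_add_sum_sum_erase, residueDivNodalSq, sub_div,
    sum_sub_distrib, ← mul_sum _ _ (2 : K)]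
  linear_combination two_mul_sum_sum_erase_mul_sub_div_sub ht ψ β

end SumIdentities

lemma hasDerivAt_alPsi_term {g : ℕ} {x y : Fin g → ℂ → ℂ} {h : ℂ[X]} {β p : ℂ} (i : Fin g)
    (hx : ∀ j, HasDerivAt (x j) (2 * y j p / alFd g x j p) p) (hy : DifferentiableAt ℂ (y i) p)
    (hsq : ∀ᶠ q in nhds p, y i q ^ 2 = (x i q - β) * h.eval (x i q))
    (hdist : ∀ j, j ≠ i → x i p ≠ x j p) (hyne : y i p ≠ 0) (hβ : x i p ≠ β) :
    HasDerivAt (fun q => y i q / (alFd g x i q * (x i q - β)))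
      (h.derivative.eval (x i p) / alFd g x i p ^ 2 - (y i p / (alFd g x i p * (x i p - β))) ^ 2 -
        y i p / (alFd g x i p * (x i p - β)) *
          ∑ j ∈ univ.erase i, (2 * y i p / alFd g x i p - 2 * y j p / alFd g x j p) /
            (x i p - x j p)) p := by
  have hdiff : ∀ j ∈ univ.erase i, x i p - x j p ≠ 0 := fun j hj =>
    sub_ne_zero.mpr (hdist j (ne_of_mem_erase hj))
  have hW : alFd g x i p ≠ 0 := prod_ne_zero_iff.mpr hdiff
  have hu : x i p - β ≠ 0 := sub_ne_zero.mpr hβ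
  have hY := HasDerivAt.of_eventually_sq_eq hy
    (((hx i).sub_const β).mul ((h.hasDerivAt (x i p)).comp p (hx i))) hsq hyne
  set L := ∑ j ∈ univ.erase i,
    (2 * y i p / alFd g x i p - 2 * y j p / alFd g x j p) / (x i p - x j p)
  have hW' : HasDerivAt (alFd g x i) (alFd g x i p * L) p :=
    HasDerivAt.fun_finsetProd_of_ne_zero (fun j _ => (hx i).sub (hx j)) hdiff
  refine (hY.div (hW'.mul ((hx i).sub_const β)) (mul_ne_zero hW hu)).congr_deriv ?_
  simp only [Pi.mul_apply, Function.comp_apply]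
  field_simp
  linear_combination -hsq.self_of_nhds

lemma hasDerivAt_alPsi {g : ℕ} {x y : Fin g → ℂ → ℂ} {h : ℂ[X]} {β p : ℂ}
    (hx : ∀ i, HasDerivAt (x i) (2 * y i p / alFd g x i p) p)
    (hy : ∀ i, DifferentiableAt ℂ (y i) p)
    (hsq : ∀ i, ∀ᶠ q in nhds p, y i q ^ 2 = (x i q - β) * h.eval (x i q))
    (hinj : Function.Injective (x · p)) (hyne : ∀ i, y i p ≠ 0) (hβ : ∀ i, x i p ≠ β) :
    HasDerivAt (alPsi g x y β) (∑ i, residueDivNodalSq (x · p) h i - alPsi g x y β p ^ 2) p := by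
  refine (HasDerivAt.fun_sum fun i _ => hasDerivAt_alPsi_term i hx (hy i) (hsq i)
    (fun j hji => hinj.ne hji.symm) (hyne i) (hβ i)).congr_deriv ?_
  rw [eq_sub_iff_add_eq]
  exact sum_add_sq_eq_sum_residueDivNodalSq hinj hβ fun i => (hsq i).self_of_nhds

theorem stmt3_general
    (g : ℕ) (hg : 1 ≤ g)
    (b : Fin (2 * g + 1) → ℂ)
    (U : Set ℂ) (hU : IsOpen U)
    (x y : Fin g → ℂ → ℂ)
    (hx : ∀ i, DifferentiableOn ℂ (x i) U)
    (hy : ∀ i, DifferentiableOn ℂ (y i) U)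
    (hdist : ∀ p ∈ U, ∀ i j, i ≠ j → x i p ≠ x j p)
    (hy2 : ∀ p ∈ U, ∀ i, (y i p) ^ 2 = ∏ j, (x i p - b j))
    (hyne : ∀ p ∈ U, ∀ i, y i p ≠ 0)
    (hflow : ∀ p ∈ U, ∀ i, deriv (x i) p = 2 * y i p / alFd g x i p)
 :
    ∀ a : Fin (2 * g + 1), (∀ p ∈ U, ∀ i, x i p ≠ b a) →
      ∀ p ∈ U,
        deriv (alPsi g x y (b a)) p + (alPsi g x y (b a) p) ^ 2
          = 2 * (∑ i : Fin g, x i p) + (-(∑ j, b j)) + b a := by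
  intro a hxa p hp
  have hpU : U ∈ nhds p := hU.mem_nhds hp
  have : Nonempty (Fin g) := ⟨⟨0, hg⟩⟩
  have hinj : Function.Injective (x · p) := Function.injective_iff_pairwise_ne.mpr (hdist p hp)
  -- `h = f / (X - b a)`
  set h : ℂ[X] := ∏ j ∈ univ.erase a, (X - C (b j))
  have hsq : ∀ i, ∀ᶠ q in nhds p, y i q ^ 2 = (x i q - b a) * h.eval (x i q) := fun i => by
    filter_upwards [hpU] with q hq
    rw [hy2 q hq i, ← mul_prod_erase univ _ (mem_univ a), eval_prod]
    simp
  have hderiv := hasDerivAt_alPsi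
    (fun i => hflow p hp i ▸ ((hx i).differentiableAt hpU).hasDerivAt)
    (fun i => (hy i).differentiableAt hpU) hsq hinj (hyne p hp) (hxa p hp)
  have hdeg : h.natDegree = 2 * Fintype.card (Fin g) := by
    rw [natDegree_prod_of_monic _ _ fun j _ => monic_X_sub_C _]
    simp [card_erase_of_mem]
  rw [hderiv.deriv, sub_add_cancel, sum_residueDivNodalSq_eq_nextCoeff_add hinj
    (monic_prod_of_monic _ _ fun j _ => monic_X_sub_C _) hdeg,
    prod_X_sub_C_nextCoeff, sum_erase_eq_sub (mem_univ a)]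
  ring

theorem stmt3
    (g : ℕ) (hg : 1 ≤ g)
    (b : Fin (2 * g + 1) → ℂ) (hb : Function.Injective b)
    (U : Set ℂ) (hU : IsOpen U) (hUne : U.Nonempty)
    (x y : Fin g → ℂ → ℂ)
    (hx : ∀ i, DifferentiableOn ℂ (x i) U)
    (hy : ∀ i, DifferentiableOn ℂ (y i) U)
    (hdist : ∀ p ∈ U, ∀ i j, i ≠ j → x i p ≠ x j p)
    (hy2 : ∀ p ∈ U, ∀ i, (y i p) ^ 2 = ∏ j, (x i p - b j))
    (hyne : ∀ p ∈ U, ∀ i, y i p ≠ 0)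
    (hflow : ∀ p ∈ U, ∀ i, deriv (x i) p = 2 * y i p / alFd g x i p)
 :
    ∀ a : Fin (2 * g + 1), (∀ p ∈ U, ∀ i, x i p ≠ b a) →
      ∀ p ∈ U,
        deriv (alPsi g x y (b a)) p + (alPsi g x y (b a) p) ^ 2
          = 2 * (∑ i : Fin g, x i p) + (-(∑ j, b j)) + b a :=
  stmt3_general g hg b U hU x y hx hy hdist hy2 hyne hflow
end

section
/- (Proposition 5.2) Under the hypotheses of the hyperelliptic u_g-flow with the two branch indices a = 1, 2, one has ψ_2 − ψ_1 = (b_2 − b_1) · Σ_{r=1}^{g} y_r / ((b_1 − x_r)(b_2 − x_r) F′(x_r)) on U; consequently al_{12} = α_1 α_2 · Σ_{r=1}^{g} y_r / ((b_1 − x_r)(b_2 − x_r) F′(x_r)) = (1/(b_2 − b_1)) (α_1 ∂_s α_2 − α_2 ∂_s α_1). -/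
/-!
Along the flow, `∂ₛ log (x_i - c) = 2 y_i / (F'(x_i) (x_i - c))`, so the logarithmic derivative of
`∏ᵢ (x_i - c)` is `2 ψ_c`. Since `α_c² = ∏ᵢ (x_i - c)`, halving gives `∂ₛ α_c = α_c ψ_c`, whence
`α₁ ∂ₛ α₂ - α₂ ∂ₛ α₁ = α₁ α₂ (ψ₂ - ψ₁)`. The first identity is the partial fraction decomposition
`1/(x - b₂) - 1/(x - b₁) = (b₂ - b₁)/((b₁ - x)(b₂ - x))` applied termwise.
-/

open Finset Filter Topology

noncomputable def al12 (g : ℕ) (x y : Fin g → ℂ → ℂ) (b1 b2 : ℂ) (α₁ α₂ : ℂ → ℂ)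
    (p : ℂ) : ℂ :=
  ((alPsi g x y b2 p - alPsi g x y b1 p) / (b2 - b1)) * (α₁ p * α₂ p)

section Flow

variable {g : ℕ} {x y : Fin g → ℂ → ℂ} {c p : ℂ}

lemma logDeriv_sub_const_of_flow {i : Fin g}
    (hflow : deriv (x i) p = 2 * y i p / alFd g x i p) :
    logDeriv (fun z => x i z - c) p = 2 * (y i p / (alFd g x i p * (x i p - c))) := by
  rw [logDeriv_apply, deriv_sub_const, hflow, div_div, mul_div_assoc]

lemma logDeriv_prod_sub_const_of_flow (hx : ∀ i, DifferentiableAt ℂ (x i) p)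
    (hflow : ∀ i, deriv (x i) p = 2 * y i p / alFd g x i p) (hxc : ∀ i, x i p ≠ c) :
    logDeriv (fun z => ∏ i, (x i z - c)) p = 2 * alPsi g x y c p := by
  rw [logDeriv_prod (f := fun i z => x i z - c) (fun i _ => sub_ne_zero.mpr (hxc i))
    (fun i _ => (hx i).sub_const c), alPsi, mul_sum]
  exact sum_congr rfl fun i _ => logDeriv_sub_const_of_flow (hflow i)

lemma deriv_eq_mul_alPsi_of_sq_eq_prod {α : ℂ → ℂ} (hα : DifferentiableAt ℂ α p) (hαp : α p ≠ 0)
    (hα2 : (α · ^ 2) =ᶠ[𝓝 p] fun z => ∏ i, (x i z - c))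
    (hx : ∀ i, DifferentiableAt ℂ (x i) p)
    (hflow : ∀ i, deriv (x i) p = 2 * y i p / alFd g x i p) (hxc : ∀ i, x i p ≠ c) :
    deriv α p = α p * alPsi g x y c p := by
  have hlog : logDeriv α p = alPsi g x y c p := by
    refine mul_left_cancel₀ (two_ne_zero (α := ℂ)) ?_
    rw [← logDeriv_prod_sub_const_of_flow hx hflow hxc, ← (logDeriv_congr_nhds hα2).eq_of_nhds,
      logDeriv_fun_pow hα]
    norm_num
  rw [← hlog, logDeriv_apply, mul_div_cancel₀ _ hαp]

lemma div_mul_sub_sub_div_mul_sub {K : Type*} [Field K] {y F x b₁ b₂ : K} (h₁ : x ≠ b₁) (h₂ : x ≠ b₂) :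
    y / (F * (x - b₂)) - y / (F * (x - b₁)) = (b₂ - b₁) * (y / ((b₁ - x) * (b₂ - x) * F)) := by
  rcases eq_or_ne F 0 with hF | hF
  · simp [hF]
  · have h₁' : b₁ - x ≠ 0 := sub_ne_zero.mpr h₁.symm
    have h₂' : b₂ - x ≠ 0 := sub_ne_zero.mpr h₂.symm
    field_simp [sub_ne_zero.mpr h₁, sub_ne_zero.mpr h₂]
    ring

lemma alPsi_sub_alPsi {b₁ b₂ : ℂ} (hx₁ : ∀ i, x i p ≠ b₁) (hx₂ : ∀ i, x i p ≠ b₂) :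
    alPsi g x y b₂ p - alPsi g x y b₁ p
      = (b₂ - b₁) * ∑ r, y r p / ((b₁ - x r p) * (b₂ - x r p) * alFd g x r p) := by
  rw [alPsi, alPsi, ← sum_sub_distrib, mul_sum]
  exact sum_congr rfl fun i _ => div_mul_sub_sub_div_mul_sub (hx₁ i) (hx₂ i)

end Flow

theorem stmt8_general
    (g : ℕ) (hg : 1 ≤ g)
    (b : Fin (2 * g + 1) → ℂ) (hb : Function.Injective b)
    (U : Set ℂ) (hU : IsOpen U)
    (x y : Fin g → ℂ → ℂ)
    (hx : ∀ i, DifferentiableOn ℂ (x i) U)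
    (hflow : ∀ p ∈ U, ∀ i, deriv (x i) p = 2 * y i p / alFd g x i p)
    (hx1 : ∀ p ∈ U, ∀ i, x i p ≠ b 0)
    (hx2 : ∀ p ∈ U, ∀ i, x i p ≠ b 1)
    (α₁ α₂ : ℂ → ℂ)
    (hα₁ : DifferentiableOn ℂ α₁ U) (hα₂ : DifferentiableOn ℂ α₂ U)
    (hα₁ne : ∀ p ∈ U, α₁ p ≠ 0) (hα₂ne : ∀ p ∈ U, α₂ p ≠ 0)
    (hα₁2 : ∀ p ∈ U, (α₁ p) ^ 2 = ∏ i : Fin g, (x i p - b 0))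
    (hα₂2 : ∀ p ∈ U, (α₂ p) ^ 2 = ∏ i : Fin g, (x i p - b 1))
 :
    ∀ p ∈ U,
      (alPsi g x y (b 1) p - alPsi g x y (b 0) p
          = (b 1 - b 0) *
            ∑ r : Fin g, y r p / ((b 0 - x r p) * (b 1 - x r p) * alFd g x r p)) ∧
      al12 g x y (b 0) (b 1) α₁ α₂ p
          = α₁ p * α₂ p *
            ∑ r : Fin g, y r p / ((b 0 - x r p) * (b 1 - x r p) * alFd g x r p) ∧
      al12 g x y (b 0) (b 1) α₁ α₂ p
          = (1 / (b 1 - b 0)) * (α₁ p * deriv α₂ p - α₂ p * deriv α₁ p) := by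
  have h01 : (0 : Fin (2 * g + 1)) ≠ 1 := by
    rw [Ne, Fin.ext_iff, Fin.val_zero, Fin.val_one', Nat.mod_eq_of_lt (by omega)]
    omega
  have hb01 : b 1 - b 0 ≠ 0 := sub_ne_zero.mpr (hb.ne h01.symm)
  intro p hp
  have hU_nhds : U ∈ 𝓝 p := hU.mem_nhds hp
  have hxp i : DifferentiableAt ℂ (x i) p := (hx i).differentiableAt hU_nhds
  have hd₁ : deriv α₁ p = α₁ p * alPsi g x y (b 0) p :=
    deriv_eq_mul_alPsi_of_sq_eq_prod (hα₁.differentiableAt hU_nhds) (hα₁ne p hp)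
      (eventually_of_mem hU_nhds hα₁2) hxp (hflow p hp) (hx1 p hp)
  have hd₂ : deriv α₂ p = α₂ p * alPsi g x y (b 1) p :=
    deriv_eq_mul_alPsi_of_sq_eq_prod (hα₂.differentiableAt hU_nhds) (hα₂ne p hp)
      (eventually_of_mem hU_nhds hα₂2) hxp (hflow p hp) (hx2 p hp)
  have hψ := alPsi_sub_alPsi (y := y) (hx1 p hp) (hx2 p hp)
  refine ⟨hψ, ?_, ?_⟩
  · rw [al12, hψ]
    field_simp
  · rw [al12, hd₁, hd₂]
    ring

theorem stmt8
    (g : ℕ) (hg : 1 ≤ g)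
    (b : Fin (2 * g + 1) → ℂ) (hb : Function.Injective b)
    (U : Set ℂ) (hU : IsOpen U) (hUne : U.Nonempty)
    (x y : Fin g → ℂ → ℂ)
    (hx : ∀ i, DifferentiableOn ℂ (x i) U)
    (hy : ∀ i, DifferentiableOn ℂ (y i) U)
    (hdist : ∀ p ∈ U, ∀ i j, i ≠ j → x i p ≠ x j p)
    (hy2 : ∀ p ∈ U, ∀ i, (y i p) ^ 2 = ∏ j, (x i p - b j))
    (hyne : ∀ p ∈ U, ∀ i, y i p ≠ 0)
    (hflow : ∀ p ∈ U, ∀ i, deriv (x i) p = 2 * y i p / alFd g x i p)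
    (hx1 : ∀ p ∈ U, ∀ i, x i p ≠ b 0)
    (hx2 : ∀ p ∈ U, ∀ i, x i p ≠ b 1)
    (α₁ α₂ : ℂ → ℂ)
    (hα₁ : DifferentiableOn ℂ α₁ U) (hα₂ : DifferentiableOn ℂ α₂ U)
    (hα₁ne : ∀ p ∈ U, α₁ p ≠ 0) (hα₂ne : ∀ p ∈ U, α₂ p ≠ 0)
    (hα₁2 : ∀ p ∈ U, (α₁ p) ^ 2 = ∏ i : Fin g, (x i p - b 0))
    (hα₂2 : ∀ p ∈ U, (α₂ p) ^ 2 = ∏ i : Fin g, (x i p - b 1))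
 :
    ∀ p ∈ U,
      (alPsi g x y (b 1) p - alPsi g x y (b 0) p
          = (b 1 - b 0) *
            ∑ r : Fin g, y r p / ((b 0 - x r p) * (b 1 - x r p) * alFd g x r p)) ∧
      al12 g x y (b 0) (b 1) α₁ α₂ p
          = α₁ p * α₂ p *
            ∑ r : Fin g, y r p / ((b 0 - x r p) * (b 1 - x r p) * alFd g x r p) ∧
      al12 g x y (b 0) (b 1) α₁ α₂ p
          = (1 / (b 1 - b 0)) * (α₁ p * deriv α₂ p - α₂ p * deriv α₁ p) :=
  stmt8_general g hg b hb U hU x y hx hflow hx1 hx2 α₁ α₂ hα₁ hα₂ hα₁ne hα₂ne hα₁2 hα₂2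
end

section
/- (Proposition 5.5(4)) Under the hypotheses of the hyperelliptic u_g-flow with the two branch indices a = 1, 2 and ψ_1 ≠ ψ_2 on U, one has ∂_s 𝔇 = 2 𝔞^2 (ψ_2 ∂_s ψ_1 − ψ_1 ∂_s ψ_2) / (b_2 − b_1) on U. -/
open Finset

noncomputable def frakA (g : ℕ) (x y : Fin g → ℂ → ℂ) (b1 b2 : ℂ) (p : ℂ) : ℂ :=
  (b2 - b1) / (alPsi g x y b2 p - alPsi g x y b1 p)

noncomputable def frakD (g : ℕ) (x y : Fin g → ℂ → ℂ) (b1 b2 : ℂ) (p : ℂ) : ℂ :=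
  (b2 - b1) * (alPsi g x y b1 p + alPsi g x y b2 p) / (alPsi g x y b2 p - alPsi g x y b1 p)

theorem HasDerivAt.mul_add_div_sub {𝕜 : Type*} [NontriviallyNormedField 𝕜] {f₁ f₂ : 𝕜 → 𝕜}
    {f₁' f₂' p : 𝕜} (c : 𝕜) (h₁ : HasDerivAt f₁ f₁' p) (h₂ : HasDerivAt f₂ f₂' p)
    (hne : f₁ p ≠ f₂ p) :
    HasDerivAt (fun q => c * (f₁ q + f₂ q) / (f₂ q - f₁ q))
      (2 * (c / (f₂ p - f₁ p)) ^ 2 * (f₂ p * f₁' - f₁ p * f₂') / c) p := by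
  have hΔ : f₂ p - f₁ p ≠ 0 := sub_ne_zero.2 hne.symm
  refine (((h₁.fun_add h₂).const_mul c).div (h₂.fun_sub h₁) hΔ).congr_deriv ?_
  -- both sides vanish when `c = 0`, the right one through `x / 0 = 0`
  rcases eq_or_ne c 0 with rfl | hc
  · simp
  · field_simp
    ring

section

variable {g : ℕ} {x y : Fin g → ℂ → ℂ} {p : ℂ}

theorem alFd_ne_zero (hdist : ∀ i j, i ≠ j → x i p ≠ x j p) (i : Fin g) : alFd g x i p ≠ 0 :=
  prod_ne_zero_iff.2 fun j hj => sub_ne_zero.2 (hdist i j (ne_of_mem_erase hj).symm)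

theorem differentiableAt_alFd (hx : ∀ i, DifferentiableAt ℂ (x i) p) (i : Fin g) :
    DifferentiableAt ℂ (alFd g x i) p :=
  DifferentiableAt.fun_finsetProd fun j _ => (hx i).sub (hx j)

theorem differentiableAt_alPsi (hx : ∀ i, DifferentiableAt ℂ (x i) p)
    (hy : ∀ i, DifferentiableAt ℂ (y i) p) (hdist : ∀ i j, i ≠ j → x i p ≠ x j p) {ba : ℂ}
    (hba : ∀ i, x i p ≠ ba) : DifferentiableAt ℂ (alPsi g x y ba) p :=
  DifferentiableAt.fun_sum fun i _ =>
    (hy i).div ((differentiableAt_alFd hx i).mul ((hx i).sub_const ba))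
      (mul_ne_zero (alFd_ne_zero hdist i) (sub_ne_zero.2 (hba i)))

end

theorem stmt12_general
    (g : ℕ)
    (b : Fin (2 * g + 1) → ℂ)
    (U : Set ℂ) (hU : IsOpen U)
    (x y : Fin g → ℂ → ℂ)
    (hx : ∀ i, DifferentiableOn ℂ (x i) U)
    (hy : ∀ i, DifferentiableOn ℂ (y i) U)
    (hdist : ∀ p ∈ U, ∀ i j, i ≠ j → x i p ≠ x j p)
    (hx1 : ∀ p ∈ U, ∀ i, x i p ≠ b 0)
    (hx2 : ∀ p ∈ U, ∀ i, x i p ≠ b 1)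
    (hpsine : ∀ p ∈ U, alPsi g x y (b 0) p ≠ alPsi g x y (b 1) p)
 :
    ∀ p ∈ U,
      deriv (frakD g x y (b 0) (b 1)) p
        = 2 * (frakA g x y (b 0) (b 1) p) ^ 2 *
            (alPsi g x y (b 1) p * deriv (alPsi g x y (b 0)) p
              - alPsi g x y (b 0) p * deriv (alPsi g x y (b 1)) p) / (b 1 - b 0) := by
  intro p hp
  have hpU : U ∈ nhds p := hU.mem_nhds hp
  have hxp : ∀ i, DifferentiableAt ℂ (x i) p := fun i => (hx i).differentiableAt hpU
  have hyp : ∀ i, DifferentiableAt ℂ (y i) p := fun i => (hy i).differentiableAt hpU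
  have hψ₁ := (differentiableAt_alPsi hxp hyp (hdist p hp) (hx1 p hp)).hasDerivAt
  have hψ₂ := (differentiableAt_alPsi hxp hyp (hdist p hp) (hx2 p hp)).hasDerivAt
  have hD : HasDerivAt (frakD g x y (b 0) (b 1)) _ p :=
    hψ₁.mul_add_div_sub (b 1 - b 0) hψ₂ (hpsine p hp)
  exact hD.deriv

theorem stmt12
    (g : ℕ) (hg : 1 ≤ g)
    (b : Fin (2 * g + 1) → ℂ) (hb : Function.Injective b)
    (U : Set ℂ) (hU : IsOpen U) (hUne : U.Nonempty)
    (x y : Fin g → ℂ → ℂ)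
    (hx : ∀ i, DifferentiableOn ℂ (x i) U)
    (hy : ∀ i, DifferentiableOn ℂ (y i) U)
    (hdist : ∀ p ∈ U, ∀ i j, i ≠ j → x i p ≠ x j p)
    (hy2 : ∀ p ∈ U, ∀ i, (y i p) ^ 2 = ∏ j, (x i p - b j))
    (hyne : ∀ p ∈ U, ∀ i, y i p ≠ 0)
    (hflow : ∀ p ∈ U, ∀ i, deriv (x i) p = 2 * y i p / alFd g x i p)
    (hx1 : ∀ p ∈ U, ∀ i, x i p ≠ b 0)
    (hx2 : ∀ p ∈ U, ∀ i, x i p ≠ b 1)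
    (hpsine : ∀ p ∈ U, alPsi g x y (b 0) p ≠ alPsi g x y (b 1) p)
 :
    ∀ p ∈ U,
      deriv (frakD g x y (b 0) (b 1)) p
        = 2 * (frakA g x y (b 0) (b 1) p) ^ 2 *
            (alPsi g x y (b 1) p * deriv (alPsi g x y (b 0)) p
              - alPsi g x y (b 0) p * deriv (alPsi g x y (b 1)) p) / (b 1 - b 0) :=
  stmt12_general g b U hU x y hx hy hdist hx1 hx2 hpsine
end

section
/- (Theorem 5.6(3)) Under the hypotheses of the hyperelliptic u_g-flow with the two branch indices a = 1, 2 and ψ_1 ≠ ψ_2 on U (so that al_{12} is nowhere vanishing), the reciprocal 1/al_{12} satisfies ∂_s^2 (1/al_{12}) + [ 𝔇 − 2 𝔞^2 ] · (1/al_{12}) = 0 on U. -/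
open Finset

/-!
Write `ψ_a = ∑ i, T i` with `T i = y i / (F'(x i) (x i - b a))` and `q_a = f / (X - b a)`.
Differentiating along the flow, `∂ψ_a + ψ_a ^ 2` is the sum of the residues of `q_a / F ^ 2` at
the `x i` plus a double sum that is antisymmetric in the two indices, hence vanishes. As `q_a` is
monic of degree `2 g`, Hermite interpolation of `q_a` at the double nodes `x i` shows that the
residue sum is `2 ∑ x i - ∑_{j ≠ a} b j`. So `ψ_a` solves the Riccati equation
`∂ψ_a = -ψ_a ^ 2 + c + b a` with `c` independent of `a`, while `∂α_a = ψ_a α_a`. Then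
`∂𝔞 = 𝔇 - 𝔞 ^ 2`, and `1 / al₁₂ = 𝔞 / (α₁ α₂)` has derivative `-𝔞 / al₁₂`; differentiating once
more gives the equation.
-/

open Polynomial Lagrange Filter Topology

theorem prod_erase_sub_ne_zero {K ι : Type*} [Field K] [Fintype ι] [DecidableEq ι] {x : ι → K}
    (hx : Function.Injective x) (i : ι) : ∏ k ∈ univ.erase i, (x i - x k) ≠ 0 :=
  prod_ne_zero_iff.2 fun _ hk => sub_ne_zero.2 (hx.ne (ne_of_mem_erase hk).symm)

namespace Polynomial

theorem sq_X_sub_C_dvd_of_isRoot {R : Type*} [CommRing R] {p : R[X]} {a : R} (h₀ : p.IsRoot a)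
    (h₁ : p.derivative.IsRoot a) : (X - C a) ^ 2 ∣ p := by
  rcases eq_or_ne p 0 with rfl | hp
  · exact dvd_zero _
  · exact (le_rootMultiplicity_iff hp).1 ((one_lt_rootMultiplicity_iff_isRoot hp).2 ⟨h₀, h₁⟩)

variable {K : Type*} [Field K] {ι : Type*}

theorem eval_derivative_nodal_eq_mul_sum_inv [DecidableEq ι] {s : Finset ι} {v : ι → K} {t : K}
    (ht : ∀ j ∈ s, t ≠ v j) :
    (derivative (nodal s v)).eval t = (nodal s v).eval t * ∑ j ∈ s, (t - v j)⁻¹ := by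
  rw [derivative_nodal, eval_finsetSum, mul_sum]
  refine sum_congr rfl fun j hj => ?_
  rw [eval_nodal, eval_nodal, ← mul_prod_erase s (fun k => t - v k) hj]
  field_simp [sub_ne_zero.2 (ht j hj)]

variable [Fintype ι] [DecidableEq ι]

/-- The residue at `x i` of `q / F ^ 2`, where `F = ∏ k, (X - x k)`. -/
noncomputable def sqResidue (x : ι → K) (q : K[X]) (i : ι) : K :=
  (q.derivative.eval (x i) - 2 * q.eval (x i) * ∑ k ∈ univ.erase i, (x i - x k)⁻¹) /
    (∏ k ∈ univ.erase i, (x i - x k)) ^ 2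

/-- The contribution of the node `x i` to the Hermite interpolation of `q` at the double nodes
`x k`. -/
noncomputable def hermiteTerm (x : ι → K) (q : K[X]) (i : ι) : K[X] :=
  (C (sqResidue x q i) * (X - C (x i)) +
      C (q.eval (x i) / (∏ k ∈ univ.erase i, (x i - x k)) ^ 2)) *
    nodal (univ.erase i) x ^ 2

variable {x : ι → K}

theorem sq_X_sub_C_dvd_sub_hermiteTerm (hx : Function.Injective x) (q : K[X]) (i : ι) :
    (X - C (x i)) ^ 2 ∣ q - hermiteTerm x q i := by
  have hD := prod_erase_sub_ne_zero hx i
  have hN' := eval_derivative_nodal_eq_mul_sum_inv (s := univ.erase i) (v := x) (t := x i)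
    fun k hk => hx.ne (ne_of_mem_erase hk).symm
  rw [eval_nodal] at hN'
  apply sq_X_sub_C_dvd_of_isRoot
  · simp only [IsRoot, hermiteTerm, eval_sub, eval_mul, eval_add, eval_C, eval_X, sub_self,
      eval_pow, eval_nodal]
    field_simp
    ring
  · simp only [IsRoot, hermiteTerm, sqResidue, derivative_sub, derivative_mul, derivative_add,
      derivative_C, derivative_X, derivative_pow, eval_sub, eval_mul, eval_add, eval_C, eval_X,
      eval_pow, sub_self, hN', eval_nodal, eval_one, eval_zero]
    field_simp
    ring

theorem sq_X_sub_C_dvd_hermiteTerm {i j : ι} (hij : i ≠ j) (q : K[X]) :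
    (X - C (x i)) ^ 2 ∣ hermiteTerm x q j :=
  dvd_mul_of_dvd_right (pow_dvd_pow_of_dvd (X_sub_C_dvd_nodal x (by simpa using hij)) 2) _

theorem hermiteTerm_eq (x : ι → K) (q : K[X]) (i : ι) :
    hermiteTerm x q i = C (sqResidue x q i) * ((X - C (x i)) * nodal (univ.erase i) x ^ 2) +
      C (q.eval (x i) / (∏ k ∈ univ.erase i, (x i - x k)) ^ 2) *
        nodal (univ.erase i) x ^ 2 := by
  rw [hermiteTerm]; ring

theorem natDegree_nodal_erase_sq (x : ι → K) (i : ι) :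
    (nodal (univ.erase i) x ^ 2).natDegree = 2 * Fintype.card ι - 2 := by
  rw [natDegree_pow, natDegree_nodal, card_erase_of_mem (mem_univ i), card_univ]
  omega

theorem natDegree_X_sub_C_mul_nodal_erase_sq (x : ι → K) (i : ι) :
    ((X - C (x i)) * nodal (univ.erase i) x ^ 2).natDegree = 2 * Fintype.card ι - 1 := by
  have := Fintype.card_pos_iff.2 ⟨i⟩
  rw [(monic_X_sub_C _).natDegree_mul (nodal_monic.pow 2), natDegree_X_sub_C,
    natDegree_nodal_erase_sq]
  omega

theorem coeff_hermiteTerm (x : ι → K) (q : K[X]) (i : ι) :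
    (hermiteTerm x q i).coeff (2 * Fintype.card ι - 1) = sqResidue x q i := by
  have := Fintype.card_pos_iff.2 ⟨i⟩
  rw [hermiteTerm_eq, coeff_add, coeff_C_mul, coeff_C_mul,
    ← natDegree_X_sub_C_mul_nodal_erase_sq x i,
    ((monic_X_sub_C _).mul (nodal_monic.pow 2)).coeff_natDegree,
    coeff_eq_zero_of_natDegree_lt (p := nodal _ _ ^ 2)]
  · ring
  · rw [natDegree_X_sub_C_mul_nodal_erase_sq, natDegree_nodal_erase_sq]; omega

theorem hermiteTerm_mem_degreeLT (x : ι → K) (q : K[X]) (i : ι) :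
    hermiteTerm x q i ∈ degreeLT K (2 * Fintype.card ι) := by
  have := Fintype.card_pos_iff.2 ⟨i⟩
  rw [mem_degreeLT]
  refine degree_le_natDegree.trans_lt (Nat.cast_lt.2 ?_)
  rw [hermiteTerm_eq]
  refine (natDegree_add_le _ _).trans_lt (max_lt ?_ ?_)
  · refine (natDegree_C_mul_le _ _).trans_lt ?_
    rw [natDegree_X_sub_C_mul_nodal_erase_sq]; omega
  · refine (natDegree_C_mul_le _ _).trans_lt ?_
    rw [natDegree_nodal_erase_sq]; omega

theorem eq_sum_hermiteTerm (hx : Function.Injective x) {q : K[X]}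
    (hq : q.degree < ↑(2 * Fintype.card ι)) : q = ∑ i, hermiteTerm x q i := by
  have hdvd : ∏ i, (X - C (x i)) ^ 2 ∣ q - ∑ i, hermiteTerm x q i := by
    refine prod_dvd_of_coprime (fun i _ j _ hij => ((pairwise_coprime_X_sub_C hx) hij).pow)
      fun i _ => ?_
    rw [← add_sum_erase _ _ (mem_univ i), ← sub_sub]
    exact dvd_sub (sq_X_sub_C_dvd_sub_hermiteTerm hx q i)
      (dvd_sum fun j hj => sq_X_sub_C_dvd_hermiteTerm (ne_of_mem_erase hj).symm q)
  have hdeg : (q - ∑ i, hermiteTerm x q i).degree < (∏ i, (X - C (x i)) ^ 2).degree := by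
    rw [prod_pow, ← nodal_eq, degree_pow, degree_nodal, card_univ, nsmul_eq_mul,
      ← Nat.cast_ofNat, ← Nat.cast_mul, ← mem_degreeLT]
    exact Submodule.sub_mem _ (mem_degreeLT.2 hq)
      (Submodule.sum_mem _ fun i _ => hermiteTerm_mem_degreeLT x q i)
  exact sub_eq_zero.1 (eq_zero_of_dvd_of_degree_lt hdvd hdeg)

theorem sum_sqResidue_of_degree_lt (hx : Function.Injective x) {q : K[X]}
    (hq : q.degree < ↑(2 * Fintype.card ι)) :
    ∑ i, sqResidue x q i = q.coeff (2 * Fintype.card ι - 1) := by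
  conv_rhs => rw [eq_sum_hermiteTerm hx hq]
  simp only [finsetSum_coeff, coeff_hermiteTerm]

theorem sqResidue_sub_nodal_sq (x : ι → K) (q : K[X]) (i : ι) :
    sqResidue x (q - nodal univ x ^ 2) i = sqResidue x q i := by
  simp [sqResidue, derivative_pow, eval_nodal_at_node (mem_univ i)]

theorem sum_sqResidue_of_monic (hx : Function.Injective x) {q : K[X]} (hq : q.Monic)
    (hdeg : q.natDegree = 2 * Fintype.card ι) :
    ∑ i, sqResidue x q i = q.nextCoeff + 2 * ∑ i, x i := by
  rcases (Fintype.card ι).eq_zero_or_pos with hι | hι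
  · have : IsEmpty ι := Fintype.card_eq_zero_iff.1 hι
    simp [nextCoeff, hdeg]
  set F := nodal univ x
  have hF : (F ^ 2).Monic := nodal_monic.pow 2
  have hFdeg : (F ^ 2).natDegree = 2 * Fintype.card ι := by
    rw [natDegree_pow, natDegree_nodal, card_univ]
  have hlt : (q - F ^ 2).degree < ↑(2 * Fintype.card ι) := by
    have h := degree_sub_lt_left (q := F ^ 2)
      (by rw [degree_eq_natDegree hq.ne_zero, degree_eq_natDegree hF.ne_zero, hdeg, hFdeg])
      hq.ne_zero (by rw [hq.leadingCoeff, hF.leadingCoeff])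
    rwa [degree_eq_natDegree hq.ne_zero, hdeg] at h
  rw [← sum_congr rfl fun i _ => sqResidue_sub_nodal_sq x q i, sum_sqResidue_of_degree_lt hx hlt,
    coeff_sub, ← hdeg, ← nextCoeff_of_natDegree_pos (by omega), hdeg, ← hFdeg,
    ← nextCoeff_of_natDegree_pos (by omega), nodal_monic.nextCoeff_pow, nodal_eq,
    prod_X_sub_C_nextCoeff]
  ring

end Polynomial

theorem sum_sum_erase_eq_zero_of_antisymm {R ι : Type*} [NonAssocRing R] [NoZeroDivisors R]
    [CharZero R] [Fintype ι] [DecidableEq ι] {G : ι → ι → R}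
    (hG : ∀ i k, i ≠ k → G k i = -G i k) : ∑ i, ∑ k ∈ univ.erase i, G i k = 0 := by
  have hswap : ∑ i, ∑ k ∈ univ.erase i, G i k = ∑ k, ∑ i ∈ univ.erase k, G i k :=
    sum_comm' fun i k => by simp [eq_comm]
  rw [← add_self_eq_zero]
  nth_rewrite 2 [hswap]
  rw [← sum_add_distrib]
  refine sum_eq_zero fun i _ => ?_
  rw [← sum_add_distrib]
  exact sum_eq_zero fun k hk => by rw [hG k i (ne_of_mem_erase hk), neg_add_cancel]

theorem HasDerivAt.finsetProd_of_ne_zero {𝕜 ι : Type*} [NontriviallyNormedField 𝕜] [DecidableEq ι]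
    {s : Finset ι} {f : ι → 𝕜 → 𝕜} {f' : ι → 𝕜} {p : 𝕜} (hf : ∀ j ∈ s, HasDerivAt (f j) (f' j) p)
    (h0 : ∀ j ∈ s, f j p ≠ 0) :
    HasDerivAt (fun t => ∏ j ∈ s, f j t) ((∏ j ∈ s, f j p) * ∑ j ∈ s, f' j / f j p) p := by
  refine (HasDerivAt.fun_finsetProd hf).congr_deriv ?_
  rw [mul_sum]
  refine sum_congr rfl fun j hj => ?_
  rw [← mul_prod_erase s (fun k => f k p) hj, smul_eq_mul]
  field_simp [h0 j hj]

theorem HasDerivAt.of_sq_eventuallyEq_prod {𝕜 ι : Type*} [NontriviallyNormedField 𝕜] [CharZero 𝕜]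
    [DecidableEq ι] {s : Finset ι} {f : ι → 𝕜 → 𝕜} {f' : ι → 𝕜} {α : 𝕜 → 𝕜} {p : 𝕜}
    (hα : DifferentiableAt 𝕜 α p) (hα0 : α p ≠ 0)
    (hsq : (fun t => α t ^ 2) =ᶠ[𝓝 p] fun t => ∏ j ∈ s, f j t)
    (hf : ∀ j ∈ s, HasDerivAt (f j) (f' j) p) (h0 : ∀ j ∈ s, f j p ≠ 0) :
    HasDerivAt α (α p * (∑ j ∈ s, f' j / f j p) / 2) p := by
  have h := (hα.hasDerivAt.pow 2).unique
    ((HasDerivAt.finsetProd_of_ne_zero hf h0).congr_of_eventuallyEq hsq)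
  rw [← hsq.eq_of_nhds] at h
  norm_num at h
  refine hα.hasDerivAt.congr_deriv ?_
  field_simp
  exact mul_left_cancel₀ hα0 (by linear_combination h)

theorem deriv_deriv_one_div_add_eq_zero_of_riccati {𝕜 : Type*} [NontriviallyNormedField 𝕜]
    {U : Set 𝕜} (hU : IsOpen U) {ψ₁ ψ₂ α₁ α₂ c : 𝕜 → 𝕜} {b₁ b₂ : 𝕜}
    (hψ₁ : ∀ p ∈ U, HasDerivAt ψ₁ (-ψ₁ p ^ 2 + c p + b₁) p)
    (hψ₂ : ∀ p ∈ U, HasDerivAt ψ₂ (-ψ₂ p ^ 2 + c p + b₂) p)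
    (hα₁ : ∀ p ∈ U, HasDerivAt α₁ (ψ₁ p * α₁ p) p) (hα₂ : ∀ p ∈ U, HasDerivAt α₂ (ψ₂ p * α₂ p) p)
    (hα₁0 : ∀ p ∈ U, α₁ p ≠ 0) (hα₂0 : ∀ p ∈ U, α₂ p ≠ 0) (hψ : ∀ p ∈ U, ψ₁ p ≠ ψ₂ p) :
    ∀ p ∈ U, deriv (deriv fun q => 1 / ((ψ₂ q - ψ₁ q) / (b₂ - b₁) * (α₁ q * α₂ q))) p +
      ((b₂ - b₁) * (ψ₁ p + ψ₂ p) / (ψ₂ p - ψ₁ p) - 2 * ((b₂ - b₁) / (ψ₂ p - ψ₁ p)) ^ 2) *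
        (1 / ((ψ₂ p - ψ₁ p) / (b₂ - b₁) * (α₁ p * α₂ p))) = 0 := by
  set A := fun q => (b₂ - b₁) / (ψ₂ q - ψ₁ q)
  set w := fun q => 1 / ((ψ₂ q - ψ₁ q) / (b₂ - b₁) * (α₁ q * α₂ q))
  have hw : w = fun q => A q / (α₁ q * α₂ q) :=
    funext fun q => by simp only [w, A]; rw [one_div, mul_inv, inv_div, ← div_eq_mul_inv]
  have hA : ∀ p ∈ U, HasDerivAt A (A p * (ψ₁ p + ψ₂ p) - A p ^ 2) p := by
    intro p hp
    have := sub_ne_zero.2 (hψ p hp).symm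
    refine ((hasDerivAt_const p (b₂ - b₁)).div ((hψ₂ p hp).fun_sub (hψ₁ p hp)) this).congr_deriv ?_
    simp only [A]
    field_simp
    ring
  have hw' : ∀ p ∈ U, HasDerivAt w (-A p * w p) p := by
    intro p hp
    have := hα₁0 p hp
    have := hα₂0 p hp
    rw [hw]
    refine ((hA p hp).div ((hα₁ p hp).fun_mul (hα₂ p hp)) (mul_ne_zero ‹_› ‹_›)).congr_deriv ?_
    simp only [A]
    field_simp
    ring
  intro p hp
  have hderiv : deriv w =ᶠ[𝓝 p] fun q => -A q * w q :=
    eventually_of_mem (hU.mem_nhds hp) fun q hq => (hw' q hq).deriv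
  rw [hderiv.deriv_eq, ((hA p hp).fun_neg.fun_mul (hw' p hp)).deriv]
  have := sub_ne_zero.2 (hψ p hp).symm
  simp only [A, w]
  field_simp
  ring

/-- The hyperelliptic `u_g`-flow: `g` distinct points `(x i, y i)` on `y ^ 2 = ∏ j, (X - b j)`,
moving with `∂ x i = 2 y i / F'(x i)`. -/
structure IsUgFlow (g : ℕ) (b : Fin (2 * g + 1) → ℂ) (U : Set ℂ) (x y : Fin g → ℂ → ℂ) : Prop where
  isOpen : IsOpen U
  differentiableOn_x : ∀ i, DifferentiableOn ℂ (x i) U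
  differentiableOn_y : ∀ i, DifferentiableOn ℂ (y i) U
  injective_x : ∀ p ∈ U, Function.Injective (x · p)
  sq_y : ∀ p ∈ U, ∀ i, y i p ^ 2 = ∏ j, (x i p - b j)
  y_ne_zero : ∀ p ∈ U, ∀ i, y i p ≠ 0
  deriv_x : ∀ p ∈ U, ∀ i, deriv (x i) p = 2 * y i p / alFd g x i p

namespace IsUgFlow

variable {g : ℕ} {b : Fin (2 * g + 1) → ℂ} {U : Set ℂ} {x y : Fin g → ℂ → ℂ}
  (hF : IsUgFlow g b U x y) {p : ℂ} (hp : p ∈ U)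
include hF hp

theorem alFd_ne_zero (i : Fin g) : alFd g x i p ≠ 0 :=
  prod_erase_sub_ne_zero (hF.injective_x p hp) i

theorem x_sub_ne_zero (i : Fin g) (j : Fin (2 * g + 1)) : x i p - b j ≠ 0 :=
  prod_ne_zero_iff.1 (hF.sq_y p hp i ▸ pow_ne_zero 2 (hF.y_ne_zero p hp i)) j (mem_univ j)

theorem hasDerivAt_x (i : Fin g) : HasDerivAt (x i) (2 * y i p / alFd g x i p) p := by
  rw [← hF.deriv_x p hp i]
  exact ((hF.differentiableOn_x i).differentiableAt (hF.isOpen.mem_nhds hp)).hasDerivAt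

theorem hasDerivAt_alFd (i : Fin g) :
    HasDerivAt (alFd g x i) (alFd g x i p * ∑ k ∈ univ.erase i,
      (2 * y i p / alFd g x i p - 2 * y k p / alFd g x k p) / (x i p - x k p)) p :=
  HasDerivAt.finsetProd_of_ne_zero (fun k _ => (hF.hasDerivAt_x hp i).sub (hF.hasDerivAt_x hp k))
    fun _ hk => sub_ne_zero.2 ((hF.injective_x p hp).ne (ne_of_mem_erase hk).symm)

theorem hasDerivAt_y (i : Fin g) :
    HasDerivAt (y i) (y i p * (∑ j, 2 * y i p / alFd g x i p / (x i p - b j)) / 2) p :=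
  HasDerivAt.of_sq_eventuallyEq_prod (f := fun j q => x i q - b j)
    ((hF.differentiableOn_y i).differentiableAt (hF.isOpen.mem_nhds hp)) (hF.y_ne_zero p hp i)
    (eventually_of_mem (hF.isOpen.mem_nhds hp) fun q hq => hF.sq_y q hq i)
    (fun j _ => (hF.hasDerivAt_x hp i).sub_const (b j)) fun j _ => hF.x_sub_ne_zero hp i j

theorem hasDerivAt_of_sq_eq_prod (a : Fin (2 * g + 1)) {α : ℂ → ℂ} (hα : DifferentiableOn ℂ α U)
    (hα0 : ∀ p ∈ U, α p ≠ 0) (hsq : ∀ p ∈ U, α p ^ 2 = ∏ i, (x i p - b a)) :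
    HasDerivAt α (alPsi g x y (b a) p * α p) p := by
  refine (HasDerivAt.of_sq_eventuallyEq_prod (f := fun i q => x i q - b a)
    (hα.differentiableAt (hF.isOpen.mem_nhds hp)) (hα0 p hp)
    (eventually_of_mem (hF.isOpen.mem_nhds hp) hsq)
    (fun i _ => (hF.hasDerivAt_x hp i).sub_const (b a))
    fun i _ => hF.x_sub_ne_zero hp i a).congr_deriv ?_
  rw [alPsi, mul_comm, mul_div_assoc, sum_mul, sum_mul]
  refine sum_congr rfl fun i _ => ?_
  have := hF.alFd_ne_zero hp i
  have := hF.x_sub_ne_zero hp i a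
  field_simp

theorem hasDerivAt_alPsi_summand (a : Fin (2 * g + 1)) (i : Fin g) :
    HasDerivAt (fun q => y i q / (alFd g x i q * (x i q - b a)))
      (sqResidue (x · p) (nodal (univ.erase a) b) i
        - (y i p / (alFd g x i p * (x i p - b a))) ^ 2
        + y i p / (alFd g x i p * (x i p - b a)) *
          ∑ k ∈ univ.erase i, 2 * y k p / alFd g x k p / (x i p - x k p)) p := by
  have hD := hF.alFd_ne_zero hp i
  have ht := hF.x_sub_ne_zero hp i a
  refine ((hF.hasDerivAt_y hp i).div ((hF.hasDerivAt_alFd hp i).mul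
    ((hF.hasDerivAt_x hp i).sub_const (b a))) (mul_ne_zero hD ht)).congr_deriv ?_
  have hτ : ∑ j, 2 * y i p / alFd g x i p / (x i p - b j) = 2 * y i p / alFd g x i p *
      ((x i p - b a)⁻¹ + ∑ j ∈ univ.erase a, (x i p - b j)⁻¹) := by
    rw [← add_sum_erase _ _ (mem_univ a), mul_add, mul_sum]
    simp only [div_eq_mul_inv]
  have hS : ∑ k ∈ univ.erase i,
        (2 * y i p / alFd g x i p - 2 * y k p / alFd g x k p) / (x i p - x k p) =
      2 * y i p / alFd g x i p * ∑ k ∈ univ.erase i, (x i p - x k p)⁻¹ -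
        ∑ k ∈ univ.erase i, 2 * y k p / alFd g x k p / (x i p - x k p) := by
    rw [mul_sum, ← sum_sub_distrib]
    exact sum_congr rfl fun k _ => by ring
  have hQ : y i p ^ 2 = (x i p - b a) * ∏ j ∈ univ.erase a, (x i p - b j) := by
    rw [hF.sq_y p hp i, mul_prod_erase _ (fun j => x i p - b j) (mem_univ a)]
  have hq' := eval_derivative_nodal_eq_mul_sum_inv (s := univ.erase a) (v := b) (t := x i p)
    fun j _ => sub_ne_zero.1 (hF.x_sub_ne_zero hp i j)
  simp only [sqResidue, hq', eval_nodal, hτ, hS, Pi.mul_apply]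
  rw [show ∏ k ∈ univ.erase i, (x i p - x k p) = alFd g x i p from rfl]
  set ρ := ∑ j ∈ univ.erase a, (x i p - b j)⁻¹
  set σ := ∑ k ∈ univ.erase i, (x i p - x k p)⁻¹
  field_simp
  linear_combination (x i p - b a) * (ρ - 2 * σ) * hQ

theorem hasDerivAt_alPsi (a : Fin (2 * g + 1)) :
    HasDerivAt (alPsi g x y (b a))
      (-alPsi g x y (b a) p ^ 2 + (2 * ∑ i, x i p - ∑ j, b j) + b a) p := by
  refine (HasDerivAt.fun_sum fun i _ => hF.hasDerivAt_alPsi_summand hp a i).congr_deriv ?_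
  set T : Fin g → ℂ := fun i => y i p / (alFd g x i p * (x i p - b a))
  have hres : ∑ i, sqResidue (x · p) (nodal (univ.erase a) b) i =
      -∑ j ∈ univ.erase a, b j + 2 * ∑ i, x i p := by
    rw [sum_sqResidue_of_monic (hF.injective_x p hp) nodal_monic (by
      simp only [natDegree_nodal, card_erase_of_mem (mem_univ a), card_univ,
        Fintype.card_fin]; omega), nodal_eq, prod_X_sub_C_nextCoeff]
  have hsq : alPsi g x y (b a) p ^ 2 = ∑ i, (T i ^ 2 + ∑ k ∈ univ.erase i, T i * T k) := by
    rw [sq, alPsi, sum_mul_sum]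
    exact sum_congr rfl fun i _ => by rw [← add_sum_erase _ _ (mem_univ i), sq]
  have hanti : ∑ i, ∑ k ∈ univ.erase i,
      (T i * (2 * y k p / alFd g x k p / (x i p - x k p)) + T i * T k) = 0 := by
    -- As `2 y k / F'(x k) = 2 T k (x k - b a)`, the summand is
    -- `T i T k (x i + x k - 2 b a) / (x i - x k)`.
    refine sum_sum_erase_eq_zero_of_antisymm fun i k hik => ?_
    have := hF.alFd_ne_zero hp i
    have := hF.alFd_ne_zero hp k
    have := hF.x_sub_ne_zero hp i a
    have := hF.x_sub_ne_zero hp k a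
    have := sub_ne_zero.2 ((hF.injective_x p hp).ne hik)
    have := sub_ne_zero.2 ((hF.injective_x p hp).ne hik.symm)
    simp only [T]
    field_simp
    ring
  rw [← add_sum_erase _ _ (mem_univ a), sum_add_distrib, sum_sub_distrib, hres, hsq]
  simp only [sum_add_distrib, mul_sum] at hanti ⊢
  linear_combination hanti

end IsUgFlow

theorem stmt15_general
    (g : ℕ)
    (b : Fin (2 * g + 1) → ℂ)
    (U : Set ℂ) (hU : IsOpen U)
    (x y : Fin g → ℂ → ℂ)
    (hx : ∀ i, DifferentiableOn ℂ (x i) U)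
    (hy : ∀ i, DifferentiableOn ℂ (y i) U)
    (hdist : ∀ p ∈ U, ∀ i j, i ≠ j → x i p ≠ x j p)
    (hy2 : ∀ p ∈ U, ∀ i, (y i p) ^ 2 = ∏ j, (x i p - b j))
    (hyne : ∀ p ∈ U, ∀ i, y i p ≠ 0)
    (hflow : ∀ p ∈ U, ∀ i, deriv (x i) p = 2 * y i p / alFd g x i p)
    (α₁ α₂ : ℂ → ℂ)
    (hα₁ : DifferentiableOn ℂ α₁ U) (hα₂ : DifferentiableOn ℂ α₂ U)
    (hα₁ne : ∀ p ∈ U, α₁ p ≠ 0) (hα₂ne : ∀ p ∈ U, α₂ p ≠ 0)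
    (hα₁2 : ∀ p ∈ U, (α₁ p) ^ 2 = ∏ i : Fin g, (x i p - b 0))
    (hα₂2 : ∀ p ∈ U, (α₂ p) ^ 2 = ∏ i : Fin g, (x i p - b 1))
    (hpsine : ∀ p ∈ U, alPsi g x y (b 0) p ≠ alPsi g x y (b 1) p)
 :
    ∀ p ∈ U,
      deriv (deriv (fun q => 1 / al12 g x y (b 0) (b 1) α₁ α₂ q)) p
        + (frakD g x y (b 0) (b 1) p - 2 * (frakA g x y (b 0) (b 1) p) ^ 2) *
            (1 / al12 g x y (b 0) (b 1) α₁ α₂ p) = 0 := by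
  have hF : IsUgFlow g b U x y :=
    ⟨hU, hx, hy, fun p hp i j h => by_contra fun hij => hdist p hp i j hij h, hy2, hyne, hflow⟩
  exact deriv_deriv_one_div_add_eq_zero_of_riccati hU
    (c := fun p => 2 * ∑ i, x i p - ∑ j, b j)
    (fun p hp => hF.hasDerivAt_alPsi hp 0) (fun p hp => hF.hasDerivAt_alPsi hp 1)
    (fun p hp => hF.hasDerivAt_of_sq_eq_prod hp 0 hα₁ hα₁ne hα₁2)
    (fun p hp => hF.hasDerivAt_of_sq_eq_prod hp 1 hα₂ hα₂ne hα₂2) hα₁ne hα₂ne hpsine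

theorem stmt15
    (g : ℕ) (hg : 1 ≤ g)
    (b : Fin (2 * g + 1) → ℂ) (hb : Function.Injective b)
    (U : Set ℂ) (hU : IsOpen U) (hUne : U.Nonempty)
    (x y : Fin g → ℂ → ℂ)
    (hx : ∀ i, DifferentiableOn ℂ (x i) U)
    (hy : ∀ i, DifferentiableOn ℂ (y i) U)
    (hdist : ∀ p ∈ U, ∀ i j, i ≠ j → x i p ≠ x j p)
    (hy2 : ∀ p ∈ U, ∀ i, (y i p) ^ 2 = ∏ j, (x i p - b j))
    (hyne : ∀ p ∈ U, ∀ i, y i p ≠ 0)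
    (hflow : ∀ p ∈ U, ∀ i, deriv (x i) p = 2 * y i p / alFd g x i p)
    (hx1 : ∀ p ∈ U, ∀ i, x i p ≠ b 0)
    (hx2 : ∀ p ∈ U, ∀ i, x i p ≠ b 1)
    (α₁ α₂ : ℂ → ℂ)
    (hα₁ : DifferentiableOn ℂ α₁ U) (hα₂ : DifferentiableOn ℂ α₂ U)
    (hα₁ne : ∀ p ∈ U, α₁ p ≠ 0) (hα₂ne : ∀ p ∈ U, α₂ p ≠ 0)
    (hα₁2 : ∀ p ∈ U, (α₁ p) ^ 2 = ∏ i : Fin g, (x i p - b 0))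
    (hα₂2 : ∀ p ∈ U, (α₂ p) ^ 2 = ∏ i : Fin g, (x i p - b 1))
    (hpsine : ∀ p ∈ U, alPsi g x y (b 0) p ≠ alPsi g x y (b 1) p)
 :
    ∀ p ∈ U,
      deriv (deriv (fun q => 1 / al12 g x y (b 0) (b 1) α₁ α₂ q)) p
        + (frakD g x y (b 0) (b 1) p - 2 * (frakA g x y (b 0) (b 1) p) ^ 2) *
            (1 / al12 g x y (b 0) (b 1) α₁ α₂ p) = 0 :=
  stmt15_general g b U hU x y hx hy hdist hy2 hyne hflow α₁ α₂ hα₁ hα₂ hα₁ne hα₂ne hα₁2 hα₂2 hpsine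
end
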